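/- If f: Σ → R^n is an immersion of a closed surface with ∫_Σ |A|^2 dμ < 12π, then the Euler characteristic satisfies χ(Σ) = 2, i.e. Σ is topologically a sphere. -/

import Mathlib

theorem sphere_from_small_total_curvature_general (IA IH : ℝ) (χ : ℤ)
    (hWlb : 4 * Real.pi ≤ (1/4) * IH)
    (hWilleq : (1/4) * IH = (1/4) * IA + Real.pi * (χ : ℝ))
    (hle : χ ≤ 2)
    (hA : IA < 12 * Real.pi) :
    χ = 2 := by
  have hπχ : Real.pi < Real.pi * χ := by linarith
  have hχ : (1 : ℤ) < χ := by
    exact_mod_cast (lt_mul_iff_one_lt_right Real.pi_pos).mp hπχ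
  omega

/-- If a closed orientable immersed surface satisfies ∫|A|² dμ < 12π, then χ(Σ) = 2,
i.e. Σ is topologically a sphere. Here W = (1/4)∫|H|² ≥ 4π and
W = (1/4)∫|A|² + πχ(Σ), with χ(Σ) an even integer ≤ 2. -/
theorem sphere_from_small_total_curvature (IA IH : ℝ) (χ : ℤ)
    (hWlb : 4 * Real.pi ≤ (1/4) * IH)
    (hWilleq : (1/4) * IH = (1/4) * IA + Real.pi * (χ : ℝ))
    (heven : Even χ) (hle : χ ≤ 2)
    (hA : IA < 12 * Real.pi) :
    χ = 2 :=
  sphere_from_small_total_curvature_general IA IH χ hWlb hWilleq hle hA
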